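/- arXiv:2505.07859 — 5 statements merged into one kernel-verified Lean document; each statement's English description precedes it below -/
import Mathlib

section
/- Let P be a strictly positive probability mass function on a finite set S, and P̂₁, …, P̂ₘ strictly positive probability mass functions on S. Define P̄(s) := (1/Z) ∏_{j=1}^m P̂ⱼ(s)^{1/m} with Z the normalizing constant. Then KL(P‖P̄) ≤ (1/m) ∑_{j=1}^m KL(P‖P̂ⱼ). (The geometric-mean ensemble is at least as close to the true distribution as the average single expert.) -/
open Real Finset

/-- The geometric-mean ensemble is at least as close (in KL) to the true
distribution as the average single expert. -/
theorem kl_geomMean_ensemble_le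
    {S : Type*} [Fintype S] [Nonempty S] (m : ℕ) (hm : 1 ≤ m)
    (P : S → ℝ) (Phat : Fin m → S → ℝ)
    (hP : ∀ s, 0 < P s) (hP1 : ∑ s, P s = 1)
    (hPhat : ∀ j s, 0 < Phat j s) (hPhat1 : ∀ j, ∑ s, Phat j s = 1)
    (Z : ℝ) (hZ : Z = ∑ u, ∏ j, (Phat j u) ^ ((1 : ℝ) / m))
    (Pbar : S → ℝ) (hPbar : ∀ s, Pbar s = (1 / Z) * ∏ j, (Phat j s) ^ ((1 : ℝ) / m)) :
    ∑ s, P s * Real.log (P s / Pbar s)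
      ≤ (1 / m) * ∑ j, ∑ s, P s * Real.log (P s / Phat j s) := by
  have hm0 : (0:ℝ) < m := by positivity
  have hZpos : 0 < Z := by
    rw [hZ]
    apply Finset.sum_pos
    · intro u _
      exact Finset.prod_pos fun j _ => Real.rpow_pos_of_pos (hPhat j u) _
    · exact Finset.univ_nonempty
  have hZle : Z ≤ 1 := by
    rw [hZ]
    calc ∑ u, ∏ j, (Phat j u) ^ ((1:ℝ)/m)
        ≤ ∑ u, ∑ j, ((1:ℝ)/m) * Phat j u := by
          apply Finset.sum_le_sum
          intro u _
          exact Real.geom_mean_le_arith_mean_weighted _ (fun _ => (1:ℝ)/m) _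
            (fun i _ => by positivity)
            (by simp [Finset.sum_const, Finset.card_univ]; field_simp)
            (fun i _ => (hPhat i u).le)
      _ = 1 := by
          rw [Finset.sum_comm]
          simp_rw [← Finset.mul_sum]
          simp [hPhat1, Finset.sum_const, Finset.card_univ]
          field_simp
  -- log of Pbar
  have hlogPbar : ∀ s, Real.log (Pbar s) = -Real.log Z + ∑ j, ((1:ℝ)/m) * Real.log (Phat j s) := by
    intro s
    rw [hPbar s, Real.log_mul (by positivity)
        (Finset.prod_pos (fun j _ => Real.rpow_pos_of_pos (hPhat j s) _)).ne',
      Real.log_div one_ne_zero hZpos.ne', Real.log_one,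
      Real.log_prod (fun j _ => (Real.rpow_pos_of_pos (hPhat j s) _).ne')]
    simp_rw [Real.log_rpow (hPhat _ s)]
    ring
  have hPbarpos : ∀ s, 0 < Pbar s := by
    intro s
    rw [hPbar s]
    exact mul_pos (by positivity) (Finset.prod_pos fun j _ => Real.rpow_pos_of_pos (hPhat j s) _)
  have key : ∑ s, P s * Real.log (P s / Pbar s)
      = Real.log Z + (1 / m) * ∑ j, ∑ s, P s * Real.log (P s / Phat j s) := by
    have e1 : ∀ s, P s * Real.log (P s / Pbar s)
        = P s * Real.log (P s) + P s * Real.log Z - ∑ j, ((1:ℝ)/m) * (P s * Real.log (Phat j s)) := by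
      intro s
      rw [Real.log_div (hP s).ne' (hPbarpos s).ne', hlogPbar s]
      have h3 : ∑ j, (1:ℝ)/m * (P s * Real.log (Phat j s))
          = P s * ∑ j, (1:ℝ)/m * Real.log (Phat j s) := by
        rw [Finset.mul_sum]; exact Finset.sum_congr rfl fun j _ => by ring
      rw [h3]; ring
    simp_rw [e1]
    rw [Finset.sum_sub_distrib, Finset.sum_add_distrib, ← Finset.sum_mul, hP1, one_mul]
    have e2 : ∀ j, ∑ s, P s * Real.log (P s / Phat j s)
        = ∑ s, P s * Real.log (P s) - ∑ s, P s * Real.log (Phat j s) := by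
      intro j
      rw [← Finset.sum_sub_distrib]
      congr 1; ext s
      rw [Real.log_div (hP s).ne' (hPhat j s).ne']; ring
    simp_rw [e2]
    rw [Finset.sum_sub_distrib, Finset.sum_const, Finset.card_univ, Fintype.card_fin,
      Finset.sum_comm]
    simp_rw [← Finset.mul_sum]
    rw [nsmul_eq_mul]
    have hmne : (m:ℝ) ≠ 0 := hm0.ne'
    field_simp
    ring
  rw [key]
  have : Real.log Z ≤ 0 := Real.log_nonpos hZpos.le hZle
  linarith
end

section
/- Let P be a strictly positive probability mass function on a finite set S and P̂₁, P̂₂ strictly positive probability mass functions on S with P̂₁ ≠ P̂₂. Then the geometric-mean ensemble P̄ of P̂₁ and P̂₂ satisfies KL(P‖P̄) < (1/2)(KL(P‖P̂₁) + KL(P‖P̂₂)): the ensemble strictly improves on the average expert whenever the experts disagree. -/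
/-!
Taking logarithms, `log P̄ = (log P̂₁ + log P̂₂) / 2 - log Z`, so the divergence from the ensemble is
exactly the average divergence from the experts plus `log Z`. The normaliser `Z` is the
Bhattacharyya coefficient, and `1 - Z` is half the sum of `(√P̂₁ - √P̂₂)²`, which is positive as soon
as the experts disagree; hence `log Z < 0`.
-/

open Real Finset

section

variable {S : Type*} [Fintype S]

lemma sum_sq_sqrt_sub_sqrt {q₁ q₂ : S → ℝ} (hq₁ : ∀ s, 0 ≤ q₁ s) (hq₂ : ∀ s, 0 ≤ q₂ s) :
    ∑ s, (√(q₁ s) - √(q₂ s)) ^ 2 = ∑ s, q₁ s + ∑ s, q₂ s - 2 * ∑ s, √(q₁ s * q₂ s) := by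
  have hterm : ∀ s, (√(q₁ s) - √(q₂ s)) ^ 2 = q₁ s + q₂ s - 2 * √(q₁ s * q₂ s) := fun s => by
    rw [sqrt_mul (hq₁ s), sub_sq, sq_sqrt (hq₁ s), sq_sqrt (hq₂ s)]
    ring
  simp only [hterm, sum_sub_distrib, sum_add_distrib, mul_sum]

lemma sum_sqrt_mul_lt_one {q₁ q₂ : S → ℝ} (hq₁ : ∀ s, 0 ≤ q₁ s) (hq₁1 : ∑ s, q₁ s = 1)
    (hq₂ : ∀ s, 0 ≤ q₂ s) (hq₂1 : ∑ s, q₂ s = 1) (hne : q₁ ≠ q₂) :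
    ∑ s, √(q₁ s * q₂ s) < 1 := by
  obtain ⟨t, ht⟩ := Function.ne_iff.mp hne
  have hsqrt_ne : √(q₁ t) - √(q₂ t) ≠ 0 :=
    sub_ne_zero.mpr fun h => ht ((sqrt_inj (hq₁ t) (hq₂ t)).mp h)
  have hpos : 0 < ∑ s, (√(q₁ s) - √(q₂ s)) ^ 2 :=
    sum_pos' (fun s _ => sq_nonneg _) ⟨t, mem_univ t, pow_two_pos_of_ne_zero hsqrt_ne⟩
  rw [sum_sq_sqrt_sub_sqrt hq₁ hq₂, hq₁1, hq₂1] at hpos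
  linarith

lemma mul_log_div_mul_sqrt_mul (p : ℝ) {a b c : ℝ} (ha : 0 < a) (hb : 0 < b) (hc : 0 < c) :
    p * log (p / (c * √(a * b))) = (1 / 2) * (p * log (p / a) + p * log (p / b)) - p * log c := by
  rcases eq_or_ne p 0 with rfl | hp
  · simp
  have hab : 0 < √(a * b) := sqrt_pos.mpr (mul_pos ha hb)
  rw [log_div hp (mul_pos hc hab).ne', log_div hp ha.ne', log_div hp hb.ne', log_mul hc.ne' hab.ne',
    log_sqrt (mul_pos ha hb).le, log_mul ha.ne' hb.ne']
  ring

lemma sum_mul_log_div_mul_sqrt_mul (p q₁ q₂ : S → ℝ) (hq₁ : ∀ s, 0 < q₁ s) (hq₂ : ∀ s, 0 < q₂ s)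
    {c : ℝ} (hc : 0 < c) :
    ∑ s, p s * log (p s / (c * √(q₁ s * q₂ s)))
      = (1 / 2) * (∑ s, p s * log (p s / q₁ s) + ∑ s, p s * log (p s / q₂ s))
        - (∑ s, p s) * log c := by
  simp only [mul_log_div_mul_sqrt_mul _ (hq₁ _) (hq₂ _) hc]
  rw [sum_sub_distrib, ← mul_sum, sum_add_distrib, ← sum_mul]

end

theorem kl_geomMean_two_experts_lt_general
    {S : Type*} [Fintype S]
    (P Q₁ Q₂ : S → ℝ)
    (hP1 : ∑ s, P s = 1)
    (hQ₁ : ∀ s, 0 < Q₁ s) (hQ₁1 : ∑ s, Q₁ s = 1)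
    (hQ₂ : ∀ s, 0 < Q₂ s) (hQ₂1 : ∑ s, Q₂ s = 1)
    (hne : Q₁ ≠ Q₂)
    (Z : ℝ) (hZ : Z = ∑ u, Real.sqrt (Q₁ u * Q₂ u))
    (Pbar : S → ℝ) (hPbar : ∀ s, Pbar s = (1 / Z) * Real.sqrt (Q₁ s * Q₂ s)) :
    ∑ s, P s * Real.log (P s / Pbar s)
      < (1 / 2) * (∑ s, P s * Real.log (P s / Q₁ s)
          + ∑ s, P s * Real.log (P s / Q₂ s)) := by
  obtain ⟨t, -⟩ := Function.ne_iff.mp hne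
  have hZ0 : 0 < Z :=
    hZ ▸ sum_pos (fun u _ => sqrt_pos.mpr (mul_pos (hQ₁ u) (hQ₂ u))) ⟨t, mem_univ t⟩
  have hZ1 : Z < 1 :=
    hZ ▸ sum_sqrt_mul_lt_one (fun s => (hQ₁ s).le) hQ₁1 (fun s => (hQ₂ s).le) hQ₂1 hne
  have hlogZ : 0 < log (1 / Z) := by
    rw [one_div, log_inv]
    linarith [log_neg hZ0 hZ1]
  simp only [hPbar]
  rw [sum_mul_log_div_mul_sqrt_mul P Q₁ Q₂ hQ₁ hQ₂ (one_div_pos.mpr hZ0), hP1]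
  linarith

/-- With two disagreeing experts, the geometric-mean ensemble strictly improves
on the average expert. -/
theorem kl_geomMean_two_experts_lt
    {S : Type*} [Fintype S] [Nonempty S]
    (P Q₁ Q₂ : S → ℝ)
    (hP : ∀ s, 0 < P s) (hP1 : ∑ s, P s = 1)
    (hQ₁ : ∀ s, 0 < Q₁ s) (hQ₁1 : ∑ s, Q₁ s = 1)
    (hQ₂ : ∀ s, 0 < Q₂ s) (hQ₂1 : ∑ s, Q₂ s = 1)
    (hne : Q₁ ≠ Q₂)
    (Z : ℝ) (hZ : Z = ∑ u, Real.sqrt (Q₁ u * Q₂ u))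
    (Pbar : S → ℝ) (hPbar : ∀ s, Pbar s = (1 / Z) * Real.sqrt (Q₁ s * Q₂ s)) :
    ∑ s, P s * Real.log (P s / Pbar s)
      < (1 / 2) * (∑ s, P s * Real.log (P s / Q₁ s)
          + ∑ s, P s * Real.log (P s / Q₂ s)) :=
  kl_geomMean_two_experts_lt_general P Q₁ Q₂ hP1 hQ₁ hQ₁1 hQ₂ hQ₂1 hne Z hZ Pbar hPbar
end

section
/- Let P, Q₁, …, Qₘ be strictly positive probability mass functions on a finite set S, and let λ₁, …, λₘ ≥ 0 with ∑ λⱼ = 1. Define the λ-weighted geometric pooled distribution Q̄(s) := (1/Z) ∏ⱼ Qⱼ(s)^{λⱼ} with Z the normalizer. Then KL(P‖Q̄) = ∑ⱼ λⱼ KL(P‖Qⱼ) + log Z and Z ≤ 1, hence KL(P‖Q̄) ≤ ∑ⱼ λⱼ KL(P‖Qⱼ). -/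
open Real Finset

/-- Weighted geometric pooling: KL decomposition, `Z ≤ 1`, and the resulting bound. -/
theorem kl_weighted_geometric_pooling
    {S : Type*} [Fintype S] [Nonempty S] (m : ℕ) (hm : 1 ≤ m)
    (P : S → ℝ) (Q : Fin m → S → ℝ) (lam : Fin m → ℝ)
    (hP : ∀ s, 0 < P s) (hP1 : ∑ s, P s = 1)
    (hQ : ∀ j s, 0 < Q j s) (hQ1 : ∀ j, ∑ s, Q j s = 1)
    (hlam0 : ∀ j, 0 ≤ lam j) (hlam1 : ∑ j, lam j = 1)
    (Z : ℝ) (hZ : Z = ∑ u, ∏ j, (Q j u) ^ (lam j))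
    (Qbar : S → ℝ) (hQbar : ∀ s, Qbar s = (1 / Z) * ∏ j, (Q j s) ^ (lam j)) :
    (∑ s, P s * Real.log (P s / Qbar s)
        = (∑ j, lam j * ∑ s, P s * Real.log (P s / Q j s)) + Real.log Z) ∧
      Z ≤ 1 ∧
      ∑ s, P s * Real.log (P s / Qbar s)
        ≤ ∑ j, lam j * ∑ s, P s * Real.log (P s / Q j s) := by
  have hprodpos : ∀ s, 0 < ∏ j, (Q j s) ^ (lam j) := fun s =>
    Finset.prod_pos fun j _ => Real.rpow_pos_of_pos (hQ j s) _
  have hZpos : 0 < Z := by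
    rw [hZ]; exact Finset.sum_pos (fun u _ => hprodpos u) univ_nonempty
  have hZle : Z ≤ 1 := by
    rw [hZ]
    calc ∑ u, ∏ j, (Q j u) ^ (lam j)
        ≤ ∑ u, ∑ j, lam j * Q j u := by
          refine Finset.sum_le_sum fun u _ => ?_
          exact Real.geom_mean_le_arith_mean_weighted _ _ _
            (fun j _ => hlam0 j) hlam1 (fun j _ => (hQ j u).le)
      _ = 1 := by
          rw [Finset.sum_comm]
          simp_rw [← Finset.mul_sum]
          simp [hQ1, hlam1]
  have hlog : ∀ s, Real.log (P s / Qbar s)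
      = (∑ j, lam j * Real.log (P s / Q j s)) + Real.log Z := by
    intro s
    have hQbarpos : 0 < Qbar s := by
      rw [hQbar s]; exact mul_pos (one_div_pos.mpr hZpos) (hprodpos s)
    rw [Real.log_div (hP s).ne' hQbarpos.ne', hQbar s,
      Real.log_mul (one_div_pos.mpr hZpos).ne' (hprodpos s).ne',
      Real.log_prod (fun j _ => (Real.rpow_pos_of_pos (hQ j s) _).ne')]
    simp_rw [Real.log_rpow (hQ _ s), Real.log_div (hP s).ne' (hQ _ s).ne',
      mul_sub, Finset.sum_sub_distrib, ← Finset.sum_mul, hlam1, one_mul,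
      Real.log_div one_ne_zero hZpos.ne', Real.log_one]
    ring
  have hdecomp : ∑ s, P s * Real.log (P s / Qbar s)
      = (∑ j, lam j * ∑ s, P s * Real.log (P s / Q j s)) + Real.log Z := by
    simp_rw [hlog, mul_add, Finset.sum_add_distrib, ← Finset.sum_mul, hP1, one_mul,
      Finset.mul_sum]
    rw [Finset.sum_comm]
    congr 1
    refine Finset.sum_congr rfl fun j _ => ?_
    refine Finset.sum_congr rfl fun s _ => ?_
    ring
  refine ⟨hdecomp, hZle, ?_⟩
  rw [hdecomp]
  have := Real.log_nonpos hZpos.le hZle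
  linarith
end

section
/- Let P, Q₁, …, Qₘ be strictly positive probability mass functions on a finite set S, with geometric-mean ensemble Q̄(s) = (1/Z)∏ⱼ Qⱼ(s)^{1/m}. Then −log Z = (1/m)∑ⱼ KL(P‖Qⱼ) − KL(P‖Q̄) ≥ 0; in particular −log Z, the ensemble's improvement over the average expert, is independent of the choice of true distribution P. -/
open Real Finset

/-- The ensemble improvement `-log Z` equals the gap between the average expert
KL divergence and the ensemble KL divergence, and is nonnegative; in particular
it does not depend on the true distribution `P`. -/
theorem neg_log_Z_is_improvement
    {S : Type*} [Fintype S] [Nonempty S] (m : ℕ) (hm : 1 ≤ m)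
    (P : S → ℝ) (Q : Fin m → S → ℝ)
    (hP : ∀ s, 0 < P s) (hP1 : ∑ s, P s = 1)
    (hQ : ∀ j s, 0 < Q j s) (hQ1 : ∀ j, ∑ s, Q j s = 1)
    (Z : ℝ) (hZ : Z = ∑ u, ∏ j, (Q j u) ^ ((1 : ℝ) / m))
    (Qbar : S → ℝ) (hQbar : ∀ s, Qbar s = (1 / Z) * ∏ j, (Q j s) ^ ((1 : ℝ) / m)) :
    (-Real.log Z
        = (1 / m) * (∑ j, ∑ s, P s * Real.log (P s / Q j s))
          - ∑ s, P s * Real.log (P s / Qbar s)) ∧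
      0 ≤ -Real.log Z := by
  have hmR : (0:ℝ) < (m:ℝ) := by exact_mod_cast Nat.lt_of_lt_of_le Nat.zero_lt_one hm
  have hG : ∀ s, (0:ℝ) < ∏ j, (Q j s) ^ ((1:ℝ)/m) := fun s =>
    Finset.prod_pos fun j _ => Real.rpow_pos_of_pos (hQ j s) _
  have hZpos : 0 < Z := by
    rw [hZ]; exact Finset.sum_pos (fun s _ => hG s) Finset.univ_nonempty
  have hlogQbar : ∀ s, Real.log (Qbar s)
      = -Real.log Z + (1/(m:ℝ)) * ∑ j, Real.log (Q j s) := by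
    intro s
    rw [hQbar s, Real.log_mul (by positivity) (ne_of_gt (hG s)), one_div, Real.log_inv,
      Real.log_prod (fun j _ => ne_of_gt (Real.rpow_pos_of_pos (hQ j s) _))]
    congr 1
    rw [Finset.mul_sum]
    exact Finset.sum_congr rfl fun j _ => Real.log_rpow (hQ j s) _
  have key : ∀ s, (1/(m:ℝ)) * ∑ j, P s * Real.log (P s / Q j s)
      - P s * Real.log (P s / Qbar s) = P s * (-Real.log Z) := by
    intro s
    have hPs := hP s
    have hQbpos : 0 < Qbar s := by rw [hQbar s]; exact mul_pos (one_div_pos.2 hZpos) (hG s)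
    have hsum : ∑ j, P s * Real.log (P s / Q j s)
        = (m:ℝ) * (P s * Real.log (P s)) - P s * ∑ j, Real.log (Q j s) := by
      simp only [Real.log_div (ne_of_gt hPs) (ne_of_gt (hQ _ s)), mul_sub]
      rw [Finset.sum_sub_distrib, Finset.sum_const, Finset.card_univ, Fintype.card_fin,
        ← Finset.mul_sum, nsmul_eq_mul]
    rw [hsum, Real.log_div (ne_of_gt hPs) (ne_of_gt hQbpos), hlogQbar s]
    field_simp
    ring
  constructor
  · rw [show (∑ j, ∑ s, P s * Real.log (P s / Q j s))
        = ∑ s, ∑ j, P s * Real.log (P s / Q j s) from Finset.sum_comm,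
      Finset.mul_sum, ← Finset.sum_sub_distrib]
    simp_rw [key]
    rw [← Finset.sum_mul, hP1, one_mul]
  · have hZle : Z ≤ 1 := by
      rw [hZ]
      have h1 : ∀ u : S, ∏ j, (Q j u) ^ ((1:ℝ)/m) ≤ ∑ j, (1/(m:ℝ)) * Q j u := by
        intro u
        refine Real.geom_mean_le_arith_mean_weighted univ (fun _ => 1/(m:ℝ)) (fun j => Q j u)
          (fun _ _ => by positivity) ?_ (fun j _ => (hQ j u).le)
        rw [Finset.sum_const, Finset.card_univ, Fintype.card_fin, nsmul_eq_mul]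
        field_simp
      calc ∑ u, ∏ j, (Q j u) ^ ((1:ℝ)/m) ≤ ∑ u, ∑ j, (1/(m:ℝ)) * Q j u :=
            Finset.sum_le_sum fun u _ => h1 u
        _ = ∑ j, (1/(m:ℝ)) * ∑ u, Q j u := by
            rw [Finset.sum_comm]; simp [Finset.mul_sum]
        _ = 1 := by
            simp only [hQ1, mul_one, Finset.sum_const, Finset.card_univ, Fintype.card_fin,
              nsmul_eq_mul]
            field_simp
    exact neg_nonneg.2 (Real.log_nonpos hZpos.le hZle)
end

section
/- Let S be a finite set, P a probability mass function on S, and G a finite group acting on S such that P(g·s) = P(s) for all g ∈ G, s ∈ S. Let Q be any strictly positive probability mass function on S and define Q̄(s) := (1/Z) ∏_{g∈G} Q(g·s)^{1/|G|}, where Z is the normalizing constant. Then Q̄ is G-invariant (Q̄(g·s) = Q̄(s) for all g ∈ G, s ∈ S) and KL(P‖Q̄) ≤ KL(P‖Q). -/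
open Real Finset

/-- Symmetrizing a model by geometric averaging over a symmetry group yields a
group-invariant distribution and never increases the KL divergence from a
group-invariant true distribution. -/
theorem kl_group_symmetrization
    {S : Type*} [Fintype S] [Nonempty S]
    (G : Type*) [Group G] [Fintype G] [MulAction G S]
    (P Q : S → ℝ)
    (hP0 : ∀ s, 0 ≤ P s) (hP1 : ∑ s, P s = 1)
    (hPinv : ∀ (g : G) (s : S), P (g • s) = P s)
    (hQ : ∀ s, 0 < Q s) (hQ1 : ∑ s, Q s = 1)
    (Z : ℝ) (hZ : Z = ∑ u, ∏ g : G, (Q (g • u)) ^ ((1 : ℝ) / (Fintype.card G)))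
    (Qbar : S → ℝ)
    (hQbar : ∀ s, Qbar s = (1 / Z) * ∏ g : G, (Q (g • s)) ^ ((1 : ℝ) / (Fintype.card G))) :
    (∀ (g : G) (s : S), Qbar (g • s) = Qbar s) ∧
      ∑ s, P s * Real.log (P s / Qbar s) ≤ ∑ s, P s * Real.log (P s / Q s) := by
  have hnpos : 0 < (Fintype.card G : ℝ) := by
    exact_mod_cast Fintype.card_pos
  set c : ℝ := 1 / (Fintype.card G) with hc
  have hcpos : 0 < c := by positivity
  have hcn : (Fintype.card G : ℝ) * c = 1 := by
    rw [hc]; exact mul_one_div_cancel hnpos.ne'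
  set F : S → ℝ := fun s => ∏ g : G, (Q (g • s)) ^ c with hF
  have hFpos : ∀ s, 0 < F s := fun s =>
    Finset.prod_pos fun g _ => Real.rpow_pos_of_pos (hQ _) _
  have hZF : Z = ∑ u, F u := hZ
  have hZpos : 0 < Z := by
    rw [hZF]; exact Finset.sum_pos (fun u _ => hFpos u) Finset.univ_nonempty
  have hQbarF : ∀ s, Qbar s = F s / Z := by
    intro s; rw [hQbar]; ring
  have hQbarpos : ∀ s, 0 < Qbar s := by
    intro s; rw [hQbarF]; exact div_pos (hFpos s) hZpos
  -- invariance of F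
  have hFinv : ∀ (h : G) (s : S), F (h • s) = F s := by
    intro h s
    have := Equiv.prod_comp (Equiv.mulRight h) (fun g : G => (Q (g • s)) ^ c)
    simpa [mul_smul] using this
  constructor
  · intro g s; rw [hQbarF, hQbarF, hFinv]
  -- Z ≤ 1 via AM-GM
  have hZle : Z ≤ 1 := by
    have amgm : ∀ u, F u ≤ ∑ g : G, c * Q (g • u) := by
      intro u
      exact Real.geom_mean_le_arith_mean_weighted Finset.univ (fun _ => c)
        (fun g => Q (g • u)) (fun _ _ => hcpos.le)
        (by simpa [Finset.card_univ] using hcn)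
        (fun g _ => (hQ _).le)
    calc Z ≤ ∑ u, ∑ g : G, c * Q (g • u) := by
            rw [hZF]; exact Finset.sum_le_sum fun u _ => amgm u
      _ = ∑ g : G, c * ∑ u, Q (g • u) := by
            rw [Finset.sum_comm]; simp [Finset.mul_sum]
      _ = 1 := by
            have : ∀ g : G, ∑ u, Q (g • u) = 1 := by
              intro g
              have := Equiv.sum_comp (MulAction.toPerm g) Q
              simpa [MulAction.toPerm] using this.trans hQ1
            simp [this, hcn]
  have hlogZ : Real.log Z ≤ 0 := Real.log_nonpos hZpos.le hZle
  -- key sum identity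
  have hsumF : ∑ s, P s * Real.log (F s) = ∑ s, P s * Real.log (Q s) := by
    have hlogF : ∀ s, Real.log (F s) = ∑ g : G, c * Real.log (Q (g • s)) := by
      intro s
      rw [hF]
      rw [Real.log_prod (fun g _ => (Real.rpow_pos_of_pos (hQ _) _).ne')]
      exact Finset.sum_congr rfl fun g _ => Real.log_rpow (hQ _) c
    calc ∑ s, P s * Real.log (F s)
        = ∑ g : G, ∑ s, c * (P s * Real.log (Q (g • s))) := by
          rw [Finset.sum_comm]
          refine Finset.sum_congr rfl fun s _ => ?_
          rw [hlogF, Finset.mul_sum]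
          exact Finset.sum_congr rfl fun g _ => by ring
      _ = ∑ g : G, c * ∑ s, P s * Real.log (Q s) := by
          refine Finset.sum_congr rfl fun g _ => ?_
          rw [← Finset.mul_sum]
          congr 1
          have := Equiv.sum_comp (MulAction.toPerm g)
            (fun s => P s * Real.log (Q s))
          simp only [MulAction.toPerm_apply] at this
          calc ∑ s, P s * Real.log (Q (g • s))
              = ∑ s, P (g • s) * Real.log (Q (g • s)) := by
                refine Finset.sum_congr rfl fun s _ => by rw [hPinv]
            _ = ∑ s, P s * Real.log (Q s) := this
      _ = ∑ s, P s * Real.log (Q s) := by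
          rw [Finset.sum_const, Finset.card_univ, nsmul_eq_mul, ← mul_assoc, hcn, one_mul]
  -- split KL sums
  have key : ∀ (R : S → ℝ), (∀ s, 0 < R s) →
      ∑ s, P s * Real.log (P s / R s)
        = ∑ s, P s * Real.log (P s) - ∑ s, P s * Real.log (R s) := by
    intro R hR
    rw [← Finset.sum_sub_distrib]
    refine Finset.sum_congr rfl fun s _ => ?_
    rcases eq_or_lt_of_le (hP0 s) with h | h
    · simp [← h]
    · rw [Real.log_div h.ne' (hR s).ne']; ring
  rw [key Q hQ, key Qbar hQbarpos]
  have hQbarlog : ∑ s, P s * Real.log (Qbar s)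
      = ∑ s, P s * Real.log (Q s) - Real.log Z := by
    calc ∑ s, P s * Real.log (Qbar s)
        = ∑ s, (P s * Real.log (F s) - P s * Real.log Z) := by
          refine Finset.sum_congr rfl fun s _ => ?_
          rw [hQbarF, Real.log_div (hFpos s).ne' hZpos.ne']; ring
      _ = ∑ s, P s * Real.log (Q s) - Real.log Z := by
          rw [Finset.sum_sub_distrib, hsumF, ← Finset.sum_mul, hP1, one_mul]
  rw [hQbarlog]
  linarith
end
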